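/- Let X be a finite connected graph of genus g and let G be a finite group acting on X, possibly with invertible edges. Define the factor graph with loops (X/G)_loop whose vertices are the G-orbits of V(X) and whose edges are the G-orbits of E(X) (invertible edges mapping to loops), with genus g(X/G)_loop = 1 − #(G-orbits on V(X)) + #(G-orbits on E(X)). Then g − 1 = |G|·(g(X/G)_loop − 1) + Σ_{v ∈ V(X)} (|G^v| − 1) − Σ_{e ∈ E(X)} (|G^{e}| − 1), where G^{e} is the setwise stabiliser of the two-element set e. -/

import Mathlib

/-!
Summing `|G_x|` over a finite `G`-set counts the pairs `(g, x)` with `g • x = x`; by Burnside's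
bijection these are as many as `|G|` times the number of orbits, so `∑ (|G_x| - 1)` is
`|G| · #orbits - #points`. Applying this to the vertices and to the `G`-invariant set of edges,
on which `G` acts as on unordered pairs of darts (so that the stabiliser of an edge is its
setwise stabiliser), and subtracting the two identities gives the formula.
-/

open MulAction

namespace MulAction

variable {G X : Type*} [Group G] [MulAction G X]

theorem sum_card_stabilizer_eq_card_orbits_mul_card_group [Finite G] [Fintype X] :
    ∑ x : X, Nat.card (stabilizer G x) = Nat.card (orbitRel.Quotient G X) * Nat.card G := by
  rw [← Nat.card_sigma, ← Nat.card_prod]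
  refine Nat.card_congr (Equiv.trans ?_ (sigmaFixedByEquivOrbitsProdGroup G X))
  exact (Equiv.subtypeProdEquivSigmaSubtype fun (x : X) (g : G) => g ∈ stabilizer G x).symm.trans
    (((Equiv.prodComm X G).subtypeEquiv fun _ => Iff.rfl).trans
      (Equiv.subtypeProdEquivSigmaSubtype fun (g : G) (x : X) => g • x = x))

theorem finsum_card_stabilizer_sub_one [Finite G] [Finite X] :
    ∑ᶠ x : X, ((Nat.card (stabilizer G x) : ℤ) - 1) =
      Nat.card G * Nat.card (orbitRel.Quotient G X) - Nat.card X := by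
  have := Fintype.ofFinite X
  rw [finsum_eq_sum_of_fintype, Finset.sum_sub_distrib, ← Nat.cast_sum,
    sum_card_stabilizer_eq_card_orbits_mul_card_group, Finset.sum_const, Finset.card_univ,
    Nat.card_eq_fintype_card (α := X)]
  push_cast
  ring

theorem card_setOf_eq_orbit :
    Nat.card {s : Set X | ∃ x, s = orbit G x} = Nat.card (orbitRel.Quotient G X) := by
  have hrange :
      {s : Set X | ∃ x, s = orbit G x} = Set.range (orbitRel.Quotient.orbit (G := G)) := by
    ext s
    simp [Quotient.exists, eq_comm]
  rw [hrange, Nat.card_range_of_injective orbitRel.Quotient.orbit_injective]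

end MulAction

namespace SubMulAction

variable {G X : Type*} [Group G] [MulAction G X]

theorem card_setOf_eq_orbit (p : SubMulAction G X) :
    Nat.card {s : Set X | ∃ x ∈ p, s = orbit G x} = Nat.card (orbitRel.Quotient G p) := by
  have himage : {s : Set X | ∃ x ∈ p, s = orbit G x} =
      Set.image Subtype.val '' {s : Set p | ∃ x, s = orbit G x} := by
    ext s
    simp [val_image_orbit, eq_comm]
  rw [himage, Nat.card_image_of_injective (Set.image_injective.mpr Subtype.val_injective),
    MulAction.card_setOf_eq_orbit]

theorem finsum_mem_card_stabilizer_sub_one [Finite G] [Finite X] (p : SubMulAction G X) :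
    ∑ᶠ x ∈ (p : Set X), ((Nat.card (stabilizer G x) : ℤ) - 1) =
      Nat.card G * Nat.card {s : Set X | ∃ x ∈ p, s = orbit G x} - Nat.card p := by
  rw [← finsum_set_coe_eq_finsum_mem, card_setOf_eq_orbit]
  simp_rw [← stabilizer_of_subMul]
  exact MulAction.finsum_card_stabilizer_sub_one

end SubMulAction

namespace Sym2

variable {G α : Type*} [Monoid G] [MulAction G α]

instance : MulAction G (Sym2 α) where
  smul g := Sym2.map (g • ·)
  one_smul e := by change Sym2.map _ e = e; simp
  mul_smul g h e := by
    change Sym2.map _ e = Sym2.map _ (Sym2.map _ e)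
    simp [Sym2.map_map, mul_smul]

theorem smul_def (g : G) (e : Sym2 α) : g • e = Sym2.map (g • ·) e := rfl

end Sym2

def dartEdges {G D : Type*} [Monoid G] [MulAction G D] (bar : D → D)
    (hbar : ∀ (g : G) (x : D), bar (g • x) = g • bar x) : SubMulAction G (Sym2 D) where
  carrier := {e | ∃ x, e = s(x, bar x)}
  smul_mem' g := by
    rintro _ ⟨x, rfl⟩
    exact ⟨g • x, by simp [Sym2.smul_def, hbar]⟩

theorem riemann_hurwitz_loop_general
    {V D G : Type} [Fintype V] [Fintype D]
    [Group G] [Fintype G] [MulAction G D] [MulAction G V]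
    (bar : D → D)
    (hbar_equiv : ∀ (g : G) (x : D), bar (g • x) = g • bar x)
    (E : Set (Sym2 D)) (hE : E = {e : Sym2 D | ∃ x : D, e = Sym2.mk x (bar x)})
    (g gQ : ℤ)
    (hg : g = 1 - (Nat.card V : ℤ) + (Nat.card E : ℤ))
    (hgQ : gQ = 1 - (Nat.card {s : Set V | ∃ v : V, s = MulAction.orbit G v} : ℤ) + (Nat.card {s : Set (Sym2 D) | ∃ e ∈ E, s = {e' : Sym2 D | ∃ g : G, Sym2.map (fun y => g • y) e = e'}} : ℤ)) :
    g - 1 = (Nat.card G : ℤ) * (gQ - 1)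
      + (∑ᶠ v : V, ((Nat.card (MulAction.stabilizer G v) : ℤ) - 1))
      - (∑ᶠ e ∈ E, ((Nat.card {g : G | Sym2.map (fun y => g • y) e = e} : ℤ) - 1)) := by
  have hV := MulAction.finsum_card_stabilizer_sub_one (G := G) (X := V)
  rw [← MulAction.card_setOf_eq_orbit] at hV
  have hEdges : ∑ᶠ e ∈ E, ((Nat.card {g : G | Sym2.map (fun y => g • y) e = e} : ℤ) - 1) =
      Nat.card G * Nat.card {s : Set (Sym2 D) | ∃ e ∈ E,
        s = {e' : Sym2 D | ∃ g : G, Sym2.map (fun y => g • y) e = e'}} - Nat.card E := by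
    subst hE
    exact (dartEdges bar hbar_equiv).finsum_mem_card_stabilizer_sub_one
  rw [hg, hgQ, hV, hEdges]
  ring

/-- A finite graph `X = (D, V; I, bar)`: `D` the darts, `V` the vertices,
`I` the incidence function, `bar` the fixed-point-free dart-reversing involution.
A finite group `G` acts on `X` via automorphisms (equivariantly and faithfully).
The edge set `E` consists of the unordered pairs `{x, bar x}`. -/
theorem riemann_hurwitz_loop
    {V D G : Type} [Fintype V] [Fintype D] [Nonempty V]
    [Group G] [Fintype G] [MulAction G D] [MulAction G V]
    (I : D → V) (bar : D → D)
    (hbar_invol : ∀ x : D, bar (bar x) = x)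
    (hbar_nofix : ∀ x : D, bar x ≠ x)
    (hI_equiv : ∀ (g : G) (x : D), I (g • x) = g • I x)
    (hbar_equiv : ∀ (g : G) (x : D), bar (g • x) = g • bar x)
    (hfaithful : ∀ g : G, (∀ x : D, g • x = x) → (∀ v : V, g • v = v) → g = 1)
    (E : Set (Sym2 D)) (hE : E = {e : Sym2 D | ∃ x : D, e = Sym2.mk x (bar x)})
    (hconn : ∀ u v : V, Relation.ReflTransGen
      (fun a b : V => ∃ x : D, I x = a ∧ I (bar x) = b) u v)
    (g gQ : ℤ)
    (hg : g = 1 - (Nat.card V : ℤ) + (Nat.card E : ℤ))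
    (hgQ : gQ = 1 - (Nat.card {s : Set V | ∃ v : V, s = MulAction.orbit G v} : ℤ) + (Nat.card {s : Set (Sym2 D) | ∃ e ∈ E, s = {e' : Sym2 D | ∃ g : G, Sym2.map (fun y => g • y) e = e'}} : ℤ)) :
    g - 1 = (Nat.card G : ℤ) * (gQ - 1)
      + (∑ᶠ v : V, ((Nat.card (MulAction.stabilizer G v) : ℤ) - 1))
      - (∑ᶠ e ∈ E, ((Nat.card {g : G | Sym2.map (fun y => g • y) e = e} : ℤ) - 1)) :=
  riemann_hurwitz_loop_general bar hbar_equiv E hE g gQ hg hgQ
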